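/- arXiv:1508.05768 — 5 statements merged into one kernel-verified Lean document; each statement's English description precedes it below -/
import Mathlib

section
/- For each q ∈ (0,1) and each multi-index k ∈ ℤ₊ⁿ, one has (q;q)_∞ⁿ ≤ [k]_q!/[|k|]_q! ≤ 1, where (q;q)_∞ = ∏_{j=1}^∞ (1 - q^j). -/
/-!
Multiplying `[m]_q` by `1 - q` gives `1 - q^m`, so `[m]_q! (1 - q)^m = (q;q)_m`, the partial
product `∏_{j<m} (1 - q^(j+1))`. Hence `[k]_q! / [|k|]_q! = ∏ᵢ (q;q)_{kᵢ} / (q;q)_{|k|}`, which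
is at least `∏ᵢ (q;q)_{kᵢ} ≥ (q;q)_∞ⁿ` because `(q;q)_{|k|} ≤ 1` and `(q;q)_m` decreases to
`(q;q)_∞`. The upper bound is `[a]_q! [b]_q! ≤ [a+b]_q!`, which holds since `[m]_q` is
increasing in `m`.
-/

open Finset

/-- `[m]_q = 1 + q + ⋯ + q^(m-1)`. -/
noncomputable def qNum (s : ℝ) (m : ℕ) : ℝ := ∑ i ∈ Finset.range m, s ^ i

/-- `[m]_q! = [1]_q ⋯ [m]_q`, with `[0]_q! = 1`. -/
noncomputable def qFact (s : ℝ) (m : ℕ) : ℝ := ∏ i ∈ Finset.range m, qNum s (i + 1)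

/-- `[k]_q! = [k₁]_q! ⋯ [kₙ]_q!` for a multi-index `k`. -/
noncomputable def qFactM {n : ℕ} (s : ℝ) (k : Fin n → ℕ) : ℝ := ∏ i, qFact s (k i)

open Filter

section qFact

variable {q : ℝ}

lemma qNum_mono (hq : 0 ≤ q) : Monotone (qNum q) := fun _ _ hab =>
  sum_le_sum_of_subset_of_nonneg (range_mono hab) fun i _ _ => pow_nonneg hq i

lemma one_le_qNum_succ (hq : 0 ≤ q) (m : ℕ) : 1 ≤ qNum q (m + 1) := by
  simpa [qNum] using qNum_mono hq (Nat.le_add_left 1 m)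

lemma qFact_pos (hq : 0 ≤ q) (m : ℕ) : 0 < qFact q m :=
  prod_pos fun i _ => zero_lt_one.trans_le (one_le_qNum_succ hq i)

lemma qFact_mul_qFact_le_qFact_add (hq : 0 ≤ q) (a b : ℕ) :
    qFact q a * qFact q b ≤ qFact q (a + b) := by
  rw [qFact, qFact, qFact, prod_range_add]
  refine mul_le_mul_of_nonneg_left (prod_le_prod ?_ ?_) (qFact_pos hq a).le
  · exact fun i _ => zero_le_one.trans (one_le_qNum_succ hq i)
  · exact fun i _ => qNum_mono hq (by omega)

lemma prod_qFact_le_qFact_sum (hq : 0 ≤ q) {ι : Type*} (s : Finset ι) (k : ι → ℕ) :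
    ∏ i ∈ s, qFact q (k i) ≤ qFact q (∑ i ∈ s, k i) := by
  classical
  induction s using Finset.induction_on with
  | empty => simp [qFact]
  | insert a s ha ih =>
    rw [prod_insert ha, sum_insert ha]
    calc qFact q (k a) * ∏ i ∈ s, qFact q (k i)
        ≤ qFact q (k a) * qFact q (∑ i ∈ s, k i) :=
          mul_le_mul_of_nonneg_left ih (qFact_pos hq _).le
      _ ≤ qFact q (k a + ∑ i ∈ s, k i) := qFact_mul_qFact_le_qFact_add hq _ _

end qFact

noncomputable def qPochhammer (q : ℝ) (m : ℕ) : ℝ := ∏ j ∈ range m, (1 - q ^ (j + 1))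

section qPochhammer

variable {q : ℝ}

lemma qFact_mul_one_sub_pow (q : ℝ) (m : ℕ) : qFact q m * (1 - q) ^ m = qPochhammer q m := by
  rw [qFact, qPochhammer, ← card_range m, ← prod_const, card_range, ← prod_mul_distrib]
  exact prod_congr rfl fun j _ => geom_sum_mul_neg q (j + 1)

lemma qFactM_mul_one_sub_pow {n : ℕ} (q : ℝ) (k : Fin n → ℕ) :
    qFactM q k * (1 - q) ^ (∑ i, k i) = ∏ i, qPochhammer q (k i) := by
  simp only [qFactM, ← prod_pow_eq_pow_sum, ← prod_mul_distrib, qFact_mul_one_sub_pow]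

lemma one_sub_pow_succ_nonneg (hq0 : 0 ≤ q) (hq1 : q ≤ 1) (j : ℕ) : 0 ≤ 1 - q ^ (j + 1) :=
  sub_nonneg.mpr (pow_le_one₀ hq0 hq1)

lemma one_sub_pow_succ_le_one (hq0 : 0 ≤ q) (j : ℕ) : 1 - q ^ (j + 1) ≤ 1 :=
  sub_le_self 1 (pow_nonneg hq0 _)

lemma qPochhammer_nonneg (hq0 : 0 ≤ q) (hq1 : q ≤ 1) (m : ℕ) : 0 ≤ qPochhammer q m :=
  prod_nonneg fun j _ => one_sub_pow_succ_nonneg hq0 hq1 j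

lemma qPochhammer_le_one (hq0 : 0 ≤ q) (hq1 : q ≤ 1) (m : ℕ) : qPochhammer q m ≤ 1 :=
  prod_le_one (fun j _ => one_sub_pow_succ_nonneg hq0 hq1 j)
    fun j _ => one_sub_pow_succ_le_one hq0 j

lemma qPochhammer_antitone (hq0 : 0 ≤ q) (hq1 : q ≤ 1) : Antitone (qPochhammer q) := by
  refine antitone_nat_of_succ_le fun m => ?_
  rw [qPochhammer, prod_range_succ]
  exact mul_le_of_le_one_right (qPochhammer_nonneg hq0 hq1 m) (one_sub_pow_succ_le_one hq0 m)

lemma multipliable_one_sub_pow_succ (hq : |q| < 1) :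
    Multipliable fun j : ℕ => 1 - q ^ (j + 1) := by
  have hsum : Summable fun j : ℕ => -q ^ (j + 1) := by
    simpa only [pow_succ] using ((summable_geometric_of_abs_lt_one hq).mul_right q).neg
  simpa only [sub_eq_add_neg] using Real.multipliable_one_add_of_summable hsum

lemma tprod_one_sub_pow_succ_le_qPochhammer (hq0 : 0 ≤ q) (hq1 : q < 1) (m : ℕ) :
    ∏' j : ℕ, (1 - q ^ (j + 1)) ≤ qPochhammer q m := by
  have hmul := multipliable_one_sub_pow_succ (abs_lt.mpr ⟨by linarith, hq1⟩)
  refine le_of_tendsto hmul.hasProd.tendsto_prod_nat ?_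
  filter_upwards [eventually_ge_atTop m] with N hN
  exact qPochhammer_antitone hq0 hq1.le hN

end qPochhammer

/-- For `q ∈ (0,1)` and `k ∈ ℤ₊ⁿ`: `(q;q)_∞ⁿ ≤ [k]_q!/[|k|]_q! ≤ 1`, where
`(q;q)_∞ = ∏_{j≥1} (1 - qʲ)`. -/
theorem stmt2 {n : ℕ} (q : ℝ) (hq0 : 0 < q) (hq1 : q < 1) (k : Fin n → ℕ) :
    (∏' j : ℕ, (1 - q ^ (j + 1))) ^ n ≤ qFactM q k / qFact q (∑ i, k i) ∧
      qFactM q k / qFact q (∑ i, k i) ≤ 1 := by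
  set S := ∑ i, k i with hS_def
  have hS := qFact_pos hq0.le S
  have hratio : qFactM q k / qFact q S * qPochhammer q S = ∏ i, qPochhammer q (k i) := by
    rw [← qFactM_mul_one_sub_pow, ← qFact_mul_one_sub_pow, ← hS_def]
    field_simp
  have hratio_nonneg : 0 ≤ qFactM q k / qFact q S :=
    div_nonneg (prod_nonneg fun i _ => (qFact_pos hq0.le _).le) hS.le
  constructor
  · calc (∏' j : ℕ, (1 - q ^ (j + 1))) ^ n
        = ∏ _i : Fin n, ∏' j : ℕ, (1 - q ^ (j + 1)) := (Fin.prod_const n _).symm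
      _ ≤ ∏ i, qPochhammer q (k i) :=
          prod_le_prod (fun _ _ => tprod_nonneg fun j => one_sub_pow_succ_nonneg hq0.le hq1.le j)
            fun i _ => tprod_one_sub_pow_succ_le_qPochhammer hq0.le hq1 (k i)
      _ = qFactM q k / qFact q S * qPochhammer q S := hratio.symm
      _ ≤ qFactM q k / qFact q S :=
          mul_le_of_le_one_right hratio_nonneg (qPochhammer_le_one hq0.le hq1.le S)
  · rw [div_le_one hS]
    exact prod_qFact_le_qFact_sum hq0.le univ k
end

section
/- Let a_k = k!/|k|! and b_k = k^k/|k|^{|k|} for k ∈ ℤ₊ⁿ (with the conventions 0⁰ = 1 and the empty product equal to 1). Then (a_k/b_k)^{1/|k|} → 1 as |k| → ∞. -/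
/-!
Write `σ(m) = m! / (m/e)^m` (`stirlingFactor m`). Since `∏ e^{kᵢ} = e^{|k|}`, the ratio
`a_k / b_k` equals `∏ σ(kᵢ) / σ(|k|)`. Stirling's estimates give `1 ≤ σ(m) ≤ e (m + 1)`, so
`a_k / b_k` lies between `(e (|k| + 1))⁻¹` and `(e (|k| + 1))ⁿ`, and both bounds tend to `1`
after taking the `|k|`-th root.
-/

open Finset Real Filter Topology
open scoped Nat

noncomputable def stirlingFactor (m : ℕ) : ℝ := m ! / (m / exp 1) ^ m

lemma natCast_pow_self_pos (m : ℕ) : 0 < (m : ℝ) ^ m := by exact_mod_cast Nat.pow_self_pos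

lemma one_le_stirlingFactor (m : ℕ) : 1 ≤ stirlingFactor m := by
  have h := pow_div_factorial_le_exp _ (Nat.cast_nonneg m) m
  rw [← exp_one_pow, div_le_iff₀ (by positivity)] at h
  rw [stirlingFactor, div_pow, one_le_div (div_pos (natCast_pow_self_pos m) (by positivity)),
    div_le_iff₀ (by positivity)]
  linarith

lemma stirlingFactor_pos (m : ℕ) : 0 < stirlingFactor m :=
  zero_lt_one.trans_le (one_le_stirlingFactor m)

lemma stirlingFactor_le (m : ℕ) : stirlingFactor m ≤ exp 1 * (m + 1) := by
  obtain _ | j := m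
  · simp [stirlingFactor]
  set m := j + 1
  -- `stirlingSeq m = σ(m) / √(2m)` is antitone from `m = 1`, where it equals `e / √2`.
  have hseq : Stirling.stirlingSeq m ≤ exp 1 / √2 :=
    Stirling.stirlingSeq_one ▸ Stirling.stirlingSeq'_antitone (Nat.zero_le j)
  rw [Stirling.stirlingSeq, div_le_div_iff₀ (by positivity) (by positivity),
    sqrt_mul zero_le_two, show exp 1 * (√2 * √m * (m / exp 1) ^ m) =
      exp 1 * √m * (m / exp 1) ^ m * √2 by ring] at hseq
  have hsqrt : √(m : ℝ) ≤ m + 1 := by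
    rw [sqrt_le_left (by positivity)]; nlinarith
  rw [stirlingFactor, div_le_iff₀ (by positivity)]
  calc (m ! : ℝ) ≤ exp 1 * √m * (m / exp 1) ^ m := le_of_mul_le_mul_right hseq (by positivity)
    _ ≤ exp 1 * (m + 1) * (m / exp 1) ^ m := by gcongr

section
variable {ι : Type*} (s : Finset ι) (k : ι → ℕ)

lemma factorial_ratio_eq_prod_stirlingFactor_div :
    ((∏ i ∈ s, ((k i)! : ℝ)) / ((∑ i ∈ s, k i)! : ℝ)) /
        ((∏ i ∈ s, (k i : ℝ) ^ k i) / ((∑ i ∈ s, k i : ℕ) : ℝ) ^ (∑ i ∈ s, k i)) =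
      (∏ i ∈ s, stirlingFactor (k i)) / stirlingFactor (∑ i ∈ s, k i) := by
  have hprod : 0 < ∏ i ∈ s, (k i : ℝ) ^ k i := prod_pos fun i _ ↦ natCast_pow_self_pos (k i)
  have hsum := natCast_pow_self_pos (∑ i ∈ s, k i)
  simp only [stirlingFactor, div_pow, prod_div_distrib, prod_pow_eq_pow_sum]
  field_simp

lemma one_le_prod_stirlingFactor : 1 ≤ ∏ i ∈ s, stirlingFactor (k i) :=
  one_le_prod fun i _ ↦ one_le_stirlingFactor (k i)

lemma inv_le_prod_stirlingFactor_div :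
    (exp 1 * ((∑ i ∈ s, k i : ℕ) + 1))⁻¹ ≤
      (∏ i ∈ s, stirlingFactor (k i)) / stirlingFactor (∑ i ∈ s, k i) := by
  rw [← one_div]
  exact div_le_div₀ (by linarith [one_le_prod_stirlingFactor s k]) (one_le_prod_stirlingFactor s k)
    (stirlingFactor_pos _) (stirlingFactor_le _)

lemma prod_stirlingFactor_div_le :
    (∏ i ∈ s, stirlingFactor (k i)) / stirlingFactor (∑ i ∈ s, k i) ≤
      (exp 1 * ((∑ i ∈ s, k i : ℕ) + 1)) ^ s.card := by
  have hprod : ∏ i ∈ s, stirlingFactor (k i) ≤ (exp 1 * ((∑ i ∈ s, k i : ℕ) + 1)) ^ s.card := by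
    rw [← prod_const]
    refine prod_le_prod (fun i _ ↦ (stirlingFactor_pos (k i)).le) fun i hi ↦ ?_
    calc stirlingFactor (k i) ≤ exp 1 * (k i + 1) := stirlingFactor_le (k i)
      _ ≤ exp 1 * ((∑ i ∈ s, k i : ℕ) + 1) := by
        gcongr
        exact_mod_cast single_le_sum (fun j _ ↦ Nat.zero_le (k j)) hi
  exact (div_le_self (by linarith [one_le_prod_stirlingFactor s k])
    (one_le_stirlingFactor _)).trans hprod

end

lemma tendsto_const_mul_add_one_rpow_div {C : ℝ} (hC : 0 < C) (c : ℝ) :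
    Tendsto (fun m : ℕ ↦ (C * (m + 1)) ^ (c / m)) atTop (𝓝 1) := by
  have hconst : Tendsto (fun m : ℕ ↦ C ^ (c / m)) atTop (𝓝 1) := by
    simpa using tendsto_const_nhds.rpow (tendsto_const_div_atTop_nhds_zero_nat c) (Or.inl hC.ne')
  have hpoly : Tendsto (fun m : ℕ ↦ ((m : ℝ) + 1) ^ (c / m)) atTop (𝓝 1) := by
    refine ((tendsto_rpow_div_mul_add c 1 (-1) one_ne_zero.symm).comp
      (tendsto_atTop_add_const_right _ 1 tendsto_natCast_atTop_atTop)).congr fun m ↦ ?_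
    simp
  simpa using (hconst.mul hpoly).congr fun m ↦ (mul_rpow hC.le (by positivity)).symm

lemma tendsto_rpow_one_div_of_inv_le_of_le_pow {α : Type*} {r : α → ℝ} {t : α → ℕ} {C : ℝ}
    (hC : 0 < C) (d : ℕ) (hlow : ∀ a, (C * (t a + 1))⁻¹ ≤ r a)
    (hup : ∀ a, r a ≤ (C * (t a + 1)) ^ d) :
    Tendsto (fun a ↦ r a ^ (1 / (t a : ℝ))) (comap t atTop) (𝓝 1) := by
  have hbase : ∀ a, 0 < C * (t a + 1) := fun a ↦ by positivity
  refine tendsto_of_tendsto_of_tendsto_of_le_of_le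
    ((tendsto_const_mul_add_one_rpow_div hC (-1)).comp tendsto_comap)
    ((tendsto_const_mul_add_one_rpow_div hC d).comp tendsto_comap) (fun a ↦ ?_) fun a ↦ ?_
  · calc (C * (t a + 1)) ^ (-1 / (t a : ℝ)) = ((C * (t a + 1))⁻¹) ^ (1 / (t a : ℝ)) := by
          rw [inv_rpow (hbase a).le, ← rpow_neg (hbase a).le, neg_div]
      _ ≤ r a ^ (1 / (t a : ℝ)) := by gcongr; exact hlow a
  · calc r a ^ (1 / (t a : ℝ)) ≤ ((C * (t a + 1)) ^ d) ^ (1 / (t a : ℝ)) := by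
          gcongr
          · exact (inv_pos.2 (hbase a)).le.trans (hlow a)
          · exact hup a
      _ = (C * (t a + 1)) ^ (d / (t a : ℝ)) := by
          rw [← rpow_natCast, ← rpow_mul (hbase a).le, mul_one_div]

/-- With `a_k = k!/|k|!` and `b_k = k^k/|k|^|k|` (conventions `0⁰ = 1`),
`(a_k/b_k)^(1/|k|) → 1` as `|k| → ∞`. -/
theorem stmt3 {n : ℕ} :
    ∀ ε > (0 : ℝ), ∃ N : ℕ, ∀ k : Fin n → ℕ, N ≤ ∑ i, k i →
      |((((∏ i, (Nat.factorial (k i) : ℝ)) / (Nat.factorial (∑ i, k i) : ℝ)) /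
            ((∏ i, ((k i : ℝ)) ^ (k i)) / (((∑ i, k i : ℕ) : ℝ)) ^ (∑ i, k i))) ^
          ((1 : ℝ) / ((∑ i, k i : ℕ) : ℝ))) - 1| < ε := by
  intro ε hε
  simp only [factorial_ratio_eq_prod_stirlingFactor_div]
  have hlim := tendsto_rpow_one_div_of_inv_le_of_le_pow (exp_pos 1) n
    (inv_le_prod_stirlingFactor_div (univ : Finset (Fin n))) fun k ↦ by
      simpa only [card_fin] using prod_stirlingFactor_div_le univ k
  obtain ⟨t, ht, hsub⟩ := mem_comap.1 (Metric.tendsto_nhds.1 hlim ε hε)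
  obtain ⟨N, hN⟩ := mem_atTop_sets.1 ht
  exact ⟨N, fun k hk ↦ hsub (hN _ hk)⟩
end

section
/- For r ∈ (0,∞), the supremum of |z^k| = |z₁|^{k₁}⋯|zₙ|^{kₙ} over the open Euclidean ball {z ∈ ℂⁿ : Σᵢ |zᵢ|² < r²} equals (k^k/|k|^{|k|})^{1/2} · r^{|k|}. -/
/-!
Squaring, `∏ |zᵢ|^{2kᵢ} = ∏ kᵢ^{kᵢ} · ∏ (|zᵢ|²/kᵢ)^{kᵢ}`, and weighted AM-GM with weights `kᵢ`
bounds the last product by `(‖z‖²/|k|)^{|k|}`. Equality holds at `|zᵢ|² = kᵢ s²/|k|`, a point of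
norm at most `s`; letting `s ↑ r` shows that the bound is the least one.
-/

open Finset Filter Topology

section

variable {ι : Type*} [Fintype ι]

noncomputable def monomialSupConst (k : ι → ℕ) : ℝ :=
  √((∏ i, (k i : ℝ) ^ k i) / ((∑ i, k i : ℕ) : ℝ) ^ ∑ i, k i)

lemma prod_div_sum_pow_eq (k : ι → ℕ) :
    ∏ i, ((k i : ℝ) / (∑ j, k j : ℕ)) ^ k i =
      (∏ i, (k i : ℝ) ^ k i) / ((∑ i, k i : ℕ) : ℝ) ^ ∑ i, k i := by
  simp_rw [div_pow]
  rw [prod_div_distrib, prod_pow_eq_pow_sum]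

lemma monomialSupConst_nonneg (k : ι → ℕ) : 0 ≤ monomialSupConst k :=
  Real.sqrt_nonneg _

lemma monomialSupConst_sq (k : ι → ℕ) :
    monomialSupConst k ^ 2 = (∏ i, (k i : ℝ) ^ k i) / ((∑ i, k i : ℕ) : ℝ) ^ ∑ i, k i :=
  Real.sq_sqrt (by positivity)

lemma monomialSupConst_eq_prod (k : ι → ℕ) :
    monomialSupConst k = ∏ i, √((k i : ℝ) / (∑ j, k j : ℕ)) ^ k i := by
  refine (pow_left_inj₀ (monomialSupConst_nonneg k) (by positivity) two_ne_zero).mp ?_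
  rw [monomialSupConst_sq, ← prod_div_sum_pow_eq, ← prod_pow]
  refine prod_congr rfl fun i _ => ?_
  rw [← pow_mul, mul_comm, pow_mul, Real.sq_sqrt (by positivity)]

theorem prod_pow_le_mul_sum_pow (k : ι → ℕ) {t : ι → ℝ} (ht : ∀ i, 0 ≤ t i) :
    ∏ i, t i ^ k i ≤
      (∏ i, (k i : ℝ) ^ k i) / ((∑ i, k i : ℕ) : ℝ) ^ (∑ i, k i) * (∑ i, t i) ^ ∑ i, k i := by
  set K : ℕ := ∑ i, k i with hK
  rcases Nat.eq_zero_or_pos K with hK0 | hKpos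
  · have hk : ∀ i, k i = 0 := fun i => sum_eq_zero_iff.mp hK0 i (mem_univ i)
    simp [hk, hK0]
  have hKpos' : (0 : ℝ) < K := by exact_mod_cast hKpos
  have hq : ∀ i, 0 ≤ t i / k i := fun i => div_nonneg (ht i) (Nat.cast_nonneg _)
  have hmean : ∑ i, (k i : ℝ) * (t i / k i) ≤ ∑ i, t i := by
    refine sum_le_sum fun i _ => ?_
    rcases eq_or_ne (k i) 0 with h | h
    · simp [h, ht i]
    · rw [mul_div_cancel₀ _ (by exact_mod_cast h)]
  have hmean_nonneg : 0 ≤ ∑ i, (k i : ℝ) * (t i / k i) :=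
    sum_nonneg fun i _ => mul_nonneg (Nat.cast_nonneg _) (hq i)
  have hamgm := Real.geom_mean_le_arith_mean univ (fun i => (k i : ℝ)) (fun i => t i / k i)
    (fun i _ => Nat.cast_nonneg _) (by rwa [← Nat.cast_sum]) (fun i _ => hq i)
  simp only [Real.rpow_natCast, ← Nat.cast_sum, ← hK] at hamgm
  rw [Real.rpow_inv_le_iff_of_pos (prod_nonneg fun i _ => pow_nonneg (hq i) _)
    (div_nonneg hmean_nonneg hKpos'.le) hKpos', Real.rpow_natCast] at hamgm
  have hsplit : ∏ i, t i ^ k i = (∏ i, (k i : ℝ) ^ k i) * ∏ i, (t i / k i) ^ k i := by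
    rw [← prod_mul_distrib]
    refine prod_congr rfl fun i _ => ?_
    rcases eq_or_ne (k i) 0 with h | h
    · simp [h]
    · rw [← mul_pow, mul_div_cancel₀ _ (by exact_mod_cast h)]
  calc ∏ i, t i ^ k i = (∏ i, (k i : ℝ) ^ k i) * ∏ i, (t i / k i) ^ k i := hsplit
    _ ≤ (∏ i, (k i : ℝ) ^ k i) * ((∑ i, t i) / K) ^ K := by
        gcongr
        exact hamgm.trans (pow_le_pow_left₀ (div_nonneg hmean_nonneg hKpos'.le) (by gcongr) K)
    _ = _ := by rw [div_pow]; ring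

theorem prod_norm_pow_le {β : ι → Type*} [∀ i, SeminormedAddCommGroup (β i)] (k : ι → ℕ)
    (z : PiLp 2 β) : ∏ i, ‖z i‖ ^ k i ≤ monomialSupConst k * ‖z‖ ^ ∑ i, k i := by
  refine (pow_le_pow_iff_left₀ (by positivity)
    (mul_nonneg (monomialSupConst_nonneg k) (by positivity)) two_ne_zero).mp ?_
  calc (∏ i, ‖z i‖ ^ k i) ^ 2 = ∏ i, (‖z i‖ ^ 2) ^ k i := by
        rw [← prod_pow]; exact prod_congr rfl fun i _ => pow_right_comm _ _ _
    _ ≤ _ := prod_pow_le_mul_sum_pow k fun i => sq_nonneg _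
    _ = (monomialSupConst k * ‖z‖ ^ ∑ i, k i) ^ 2 := by
        rw [mul_pow, monomialSupConst_sq, ← PiLp.norm_sq_eq_of_L2, ← pow_mul, ← pow_mul]
        ring

theorem exists_norm_le_prod_norm_pow_eq (𝕜 : Type*) [RCLike 𝕜] (k : ι → ℕ) {s : ℝ}
    (hs : 0 ≤ s) :
    ∃ z : EuclideanSpace 𝕜 ι, ‖z‖ ≤ s ∧ ∏ i, ‖z i‖ ^ k i = monomialSupConst k * s ^ ∑ i, k i := by
  set w : ι → ℝ := fun i => (k i : ℝ) / (∑ j, k j : ℕ)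
  have hnorm : ∀ i, ‖((√(w i) * s : ℝ) : 𝕜)‖ = √(w i) * s := fun i => by
    rw [RCLike.norm_ofReal, abs_of_nonneg (by positivity)]
  refine ⟨WithLp.toLp 2 fun i => ((√(w i) * s : ℝ) : 𝕜), ?_, ?_⟩
  · refine (pow_le_pow_iff_left₀ (norm_nonneg _) hs two_ne_zero).mp ?_
    have hw : ∑ i, w i ≤ 1 := by
      simp only [w, ← sum_div, ← Nat.cast_sum]; exact div_self_le_one _
    rw [EuclideanSpace.norm_sq_eq]
    simp only [hnorm, mul_pow]
    calc ∑ i, √(w i) ^ 2 * s ^ 2 = (∑ i, w i) * s ^ 2 := by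
          rw [sum_mul]
          exact sum_congr rfl fun i _ => by rw [Real.sq_sqrt (by positivity)]
      _ ≤ s ^ 2 := mul_le_of_le_one_left (sq_nonneg s) hw
  · simp only [hnorm, mul_pow, prod_mul_distrib, prod_pow_eq_pow_sum,
      monomialSupConst_eq_prod]
    rfl

end

/-- The supremum of `|z^k| = ∏ᵢ |zᵢ|^(kᵢ)` over the open Euclidean ball of radius `r` in `ℂⁿ`
equals `(k^k/|k|^|k|)^(1/2) · r^|k|` (conventions `0⁰ = 1`). -/
theorem stmt4 (n : ℕ) (k : Fin n → ℕ) (r : ℝ) (hr : 0 < r) :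
    IsLUB {x : ℝ | ∃ z : EuclideanSpace ℂ (Fin n), ‖z‖ < r ∧
        x = ∏ i, ‖z i‖ ^ (k i)}
      (Real.sqrt ((∏ i, ((k i : ℝ)) ^ (k i)) / (((∑ i, k i : ℕ) : ℝ)) ^ (∑ i, k i)) *
        r ^ (∑ i, k i)) := by
  change IsLUB _ (monomialSupConst k * r ^ ∑ i, k i)
  refine ⟨?_, fun b hb => ?_⟩
  · rintro _ ⟨z, hz, rfl⟩
    exact (prod_norm_pow_le k z).trans <|
      mul_le_mul_of_nonneg_left (pow_le_pow_left₀ (norm_nonneg z) hz.le _)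
        (monomialSupConst_nonneg k)
  · have hcont : Tendsto (fun s => monomialSupConst k * s ^ ∑ i, k i) (𝓝[<] r)
        (𝓝 (monomialSupConst k * r ^ ∑ i, k i)) :=
      ((continuous_const.mul (continuous_pow _)).tendsto r).mono_left nhdsWithin_le_nhds
    refine le_of_tendsto hcont (eventually_of_mem (Ico_mem_nhdsLT hr) fun s hs => ?_)
    obtain ⟨z, hzs, hz⟩ := exists_norm_le_prod_norm_pow_eq ℂ k hs.1
    exact hb ⟨z, hzs.trans_lt hs.2, hz.symm⟩
end

section
/- Define ω : ℤ₊ⁿ × ℤ → ℤ by ω(k,p) = p if p ≥ 0; ω(k,p) = 0 if p < 0 and p + Σ_{i<j} k_i k_j ≥ 0; and ω(k,p) = p + Σ_{i<j} k_i k_j otherwise. Then for all k, ℓ ∈ ℤ₊ⁿ and p, q ∈ ℤ: |ω(k+ℓ, p + q − Σ_{i>j} k_i ℓ_j)| ≤ |ω(k,p)| + |ω(ℓ,q)|. -/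
open Finset

/-- `Σ_{i<j} kᵢ ℓⱼ` as an integer. -/
def sumLT {n : ℕ} (k l : Fin n → ℕ) : ℤ :=
  ∑ p ∈ Finset.univ.filter (fun p : Fin n × Fin n => p.1 < p.2), (k p.1 * l p.2 : ℤ)

/-- `Σ_{i>j} kᵢ ℓⱼ` as an integer. -/
def sumGT {n : ℕ} (k l : Fin n → ℕ) : ℤ :=
  ∑ p ∈ Finset.univ.filter (fun p : Fin n × Fin n => p.2 < p.1), (k p.1 * l p.2 : ℤ)

/-- `ω(k,p) = p` if `p ≥ 0`; `ω(k,p) = 0` if `p < 0 ≤ p + Σ_{i<j} kᵢ kⱼ`;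
`ω(k,p) = p + Σ_{i<j} kᵢ kⱼ` otherwise. -/
def omegaFn {n : ℕ} (k : Fin n → ℕ) (p : ℤ) : ℤ :=
  if 0 ≤ p then p else if 0 ≤ p + sumLT k k then 0 else p + sumLT k k

lemma sumLT_nonneg {n : ℕ} (k l : Fin n → ℕ) : 0 ≤ sumLT k l :=
  Finset.sum_nonneg fun _ _ => by positivity

lemma sumGT_nonneg {n : ℕ} (k l : Fin n → ℕ) : 0 ≤ sumGT k l :=
  Finset.sum_nonneg fun _ _ => by positivity

lemma sumGT_eq {n : ℕ} (k l : Fin n → ℕ) : sumGT k l = sumLT l k := by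
  unfold sumGT sumLT
  exact Finset.sum_nbij' Prod.swap Prod.swap
    (by simp) (by simp) (by simp) (by simp) (by simp [mul_comm])

lemma sumLT_add {n : ℕ} (k l : Fin n → ℕ) :
    sumLT (k + l) (k + l) = sumLT k k + sumLT l l + sumLT k l + sumGT k l := by
  rw [sumGT_eq]
  unfold sumLT
  rw [← Finset.sum_add_distrib, ← Finset.sum_add_distrib, ← Finset.sum_add_distrib]
  refine Finset.sum_congr rfl fun x _ => ?_
  simp [Pi.add_apply]
  ring

lemma omega_mem {n : ℕ} (k : Fin n → ℕ) (p : ℤ) :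
    p ≤ omegaFn k p ∧ omegaFn k p ≤ p + sumLT k k := by
  unfold omegaFn
  have hS := sumLT_nonneg k k
  split_ifs with h1 h2 <;> constructor <;> omega

lemma omega_min {n : ℕ} (k : Fin n → ℕ) (p x : ℤ) (h1 : p ≤ x) (h2 : x ≤ p + sumLT k k) :
    |omegaFn k p| ≤ |x| := by
  have h3 := le_abs_self x
  have h4 := neg_abs_le x
  unfold omegaFn
  split_ifs with g1 g2
  · rw [abs_of_nonneg g1]; omega
  · simp
  · rw [abs_of_nonpos (by omega)]; omega

/-- For all `k, ℓ ∈ ℤ₊ⁿ` and `p, q ∈ ℤ`: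
`|ω(k+ℓ, p + q − Σ_{i>j} kᵢ ℓⱼ)| ≤ |ω(k,p)| + |ω(ℓ,q)|`. -/
theorem stmt10 {n : ℕ} (k l : Fin n → ℕ) (p q : ℤ) :
    |omegaFn (k + l) (p + q - sumGT k l)| ≤ |omegaFn k p| + |omegaFn l q| := by
  obtain ⟨ha1, ha2⟩ := omega_mem k p
  obtain ⟨hb1, hb2⟩ := omega_mem l q
  have hA := sumLT_nonneg k l
  have hB := sumGT_nonneg k l
  have hkey : |omegaFn (k + l) (p + q - sumGT k l)| ≤ |omegaFn k p + omegaFn l q| := by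
    apply omega_min
    · omega
    · rw [sumLT_add]; omega
  exact hkey.trans (abs_add_le _ _)
end

section
/- Let |q| = 1. In the Fréchet algebra 𝒪_q(𝔹_rⁿ) (completion of 𝒪_q^reg(ℂⁿ) in the norms ‖Σ c_k x^k‖_{B,ρ} = Σ_k |c_k| (k!/|k|!)^{1/2} ρ^{|k|}, 0 < ρ < r), the joint ℓ²-spectral radius of the generating tuple x = (x₁,…,xₙ) equals r. -/
open Finset Filter

/-- The number of inversions of a word `α : Fin d → Fin n`. -/
def inversions {d n : ℕ} (α : Fin d → Fin n) : ℕ :=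
  (Finset.univ.filter (fun p : Fin d × Fin d => p.1 < p.2 ∧ α p.2 < α p.1)).card

open scoped Nat Topology

/-!
For `|q| = 1` the factor `|q^(−m(α))|` is `1`, and over words of length `d` one has
`Σ_α p(α)! = n (n+1) ⋯ (n+d−1)`, so `Σ_α p(α)!/d! = C(n+d−1, d)`.
So the `d`-th sum is `C(n+d−1, d) ρ^(2d)`; the binomial grows polynomially in `d`, hence its
`1/(2d)`-th root tends to `1`, every limit equals `ρ`, and the set of limits is `(0, r)`.
-/

section WordCounts

variable {ι : Type*} [DecidableEq ι]

lemma card_filter_fin_cons_eq {d : ℕ} (j : ι) (β : Fin d → ι) (i : ι) :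
    #{x | (Fin.cons j β : Fin (d + 1) → ι) x = i} = (if j = i then 1 else 0) + #{x | β x = i} := by
  rw [card_filter, card_filter, Fin.sum_univ_succ]
  simp

variable [Fintype ι]

lemma prod_factorial_card_filter_fin_cons {d : ℕ} (j : ι) (β : Fin d → ι) :
    ∏ i, (#{x | (Fin.cons j β : Fin (d + 1) → ι) x = i})! =
      (#{x | β x = j} + 1) * ∏ i, (#{x | β x = i})! := by
  rw [← mul_prod_erase _ _ (mem_univ j), ← mul_prod_erase _ _ (mem_univ j), ← mul_assoc,
    card_filter_fin_cons_eq, if_pos rfl, add_comm 1, Nat.factorial_succ]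
  congr 1
  refine prod_congr rfl fun i hi => ?_
  rw [card_filter_fin_cons_eq, if_neg (ne_of_mem_erase hi).symm, zero_add]

/-- Appending a letter `j` to a word multiplies `∏ᵢ kᵢ!` by `kⱼ + 1`, and these factors sum to
`d + card ι`. -/
theorem sum_prod_factorial_card_filter_eq_ascFactorial (d : ℕ) :
    ∑ α : Fin d → ι, ∏ i, (#{x | α x = i})! = (Fintype.card ι).ascFactorial d := by
  induction d with
  | zero => simp
  | succ d ih =>
    rw [← (Fin.consEquiv fun _ => ι).sum_comp, Fintype.sum_prod_type]
    simp only [Fin.consEquiv_apply, prod_factorial_card_filter_fin_cons]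
    rw [sum_comm, Nat.ascFactorial_succ, ← ih, mul_sum]
    refine sum_congr rfl fun β _ => ?_
    rw [← sum_mul, sum_add_distrib, ← card_eq_sum_card_fiberwise fun x _ => mem_univ (β x)]
    simp [add_comm]

end WordCounts

lemma sum_prod_factorial_div_factorial_eq_choose (n d : ℕ) :
    ∑ α : Fin d → Fin n, (∏ i, ((#{x | α x = i})! : ℝ)) / d ! = (n + d - 1).choose d := by
  have h : ∑ α : Fin d → Fin n, ∏ i, ((#{x | α x = i})! : ℝ) = n.ascFactorial d := by
    exact_mod_cast Fintype.card_fin n ▸ sum_prod_factorial_card_filter_eq_ascFactorial d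
  rw [← sum_div, h, Nat.ascFactorial_eq_factorial_mul_choose']
  push_cast
  field_simp

lemma choose_le_two_mul_pow {n d : ℕ} (hn : 0 < n) (hd : n ≤ d) :
    (n + d - 1).choose d ≤ (2 * d) ^ n :=
  calc (n + d - 1).choose d = (n + d - 1).choose (n - 1) := by
        rw [← Nat.choose_symm (by omega : d ≤ n + d - 1)]
        congr 1
        omega
    _ ≤ (n + d - 1) ^ (n - 1) := Nat.choose_le_pow _ _
    _ ≤ (2 * d) ^ (n - 1) := Nat.pow_le_pow_left (by omega) _
    _ ≤ (2 * d) ^ n := Nat.pow_le_pow_right (by omega) (by omega)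

lemma tendsto_choose_rpow_one_div_two_mul {n : ℕ} (hn : 0 < n) :
    Tendsto (fun d : ℕ => ((n + d - 1).choose d : ℝ) ^ (1 / (2 * (d : ℝ)))) atTop (𝓝 1) := by
  have hupper : Tendsto (fun d : ℕ => (2 * (d : ℝ)) ^ ((n : ℝ) / (1 * (2 * d) + 0))) atTop (𝓝 1) :=
    (tendsto_rpow_div_mul_add (n : ℝ) 1 0 zero_ne_one).comp
      (tendsto_natCast_atTop_atTop.const_mul_atTop two_pos)
  simp only [one_mul, add_zero] at hupper
  refine tendsto_of_tendsto_of_tendsto_of_le_of_le' tendsto_const_nhds hupper ?_ ?_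
  · filter_upwards [eventually_ge_atTop 1] with d hd
    have : (1 : ℝ) ≤ (n + d - 1).choose d := by exact_mod_cast Nat.choose_pos (by omega)
    exact Real.one_le_rpow this (by positivity)
  · filter_upwards [eventually_ge_atTop n] with d hd
    have hbound : ((n + d - 1).choose d : ℝ) ≤ (2 * d : ℝ) ^ (n : ℝ) := by
      rw [Real.rpow_natCast]
      exact_mod_cast choose_le_two_mul_pow hn hd
    calc ((n + d - 1).choose d : ℝ) ^ (1 / (2 * (d : ℝ)))
        ≤ ((2 * d : ℝ) ^ (n : ℝ)) ^ (1 / (2 * (d : ℝ))) := by gcongr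
      _ = (2 * (d : ℝ)) ^ ((n : ℝ) / (2 * d)) := by
        rw [← Real.rpow_mul (by positivity), mul_one_div]

/-- `sumSqNormWords n q ρ d = Σ_{α ∈ {1,…,n}^d} ‖x_α‖_{B,ρ}²`. -/
noncomputable def sumSqNormWords (n : ℕ) (q : ℂ) (ρ : ℝ) (d : ℕ) : ℝ :=
  ∑ α : Fin d → Fin n,
    (‖q ^ (-(inversions α : ℤ))‖ *
      Real.sqrt ((∏ i : Fin n, ((#{j | α j = i})! : ℝ)) / (d ! : ℝ)) * ρ ^ d) ^ 2

lemma sumSqNormWords_eq {n : ℕ} {q : ℂ} (hq : ‖q‖ = 1) (ρ : ℝ) (d : ℕ) :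
    sumSqNormWords n q ρ d = (n + d - 1).choose d * ρ ^ (2 * d) := by
  have hterm : ∀ α : Fin d → Fin n,
      (‖q ^ (-(inversions α : ℤ))‖ *
        Real.sqrt ((∏ i : Fin n, ((#{j | α j = i})! : ℝ)) / (d ! : ℝ)) * ρ ^ d) ^ 2 =
      (∏ i : Fin n, ((#{j | α j = i})! : ℝ)) / d ! * ρ ^ (2 * d) := fun α => by
    rw [norm_zpow, hq, one_zpow, one_mul, mul_pow, Real.sq_sqrt (by positivity), ← pow_mul,
      mul_comm d]
  rw [sumSqNormWords, sum_congr rfl fun α _ => hterm α, ← sum_mul,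
    sum_prod_factorial_div_factorial_eq_choose]

lemma tendsto_sumSqNormWords_rpow {n : ℕ} (hn : 0 < n) {q : ℂ} (hq : ‖q‖ = 1) {ρ : ℝ}
    (hρ : 0 ≤ ρ) :
    Tendsto (fun d : ℕ => sumSqNormWords n q ρ d ^ (1 / (2 * (d : ℝ)))) atTop (𝓝 ρ) := by
  have hlim := (tendsto_choose_rpow_one_div_two_mul hn).mul_const ρ
  rw [one_mul] at hlim
  refine hlim.congr' ?_
  filter_upwards [eventually_ge_atTop 1] with d hd
  have hroot : (ρ ^ (2 * d)) ^ (1 / (2 * (d : ℝ))) = ρ := by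
    rw [one_div]
    exact_mod_cast Real.pow_rpow_inv_natCast hρ (by omega : 2 * d ≠ 0)
  rw [sumSqNormWords_eq hq, Real.mul_rpow (by positivity) (by positivity), hroot]

/-- The summand is `‖x_α‖_{B,ρ}² = (|q^(−m(α))| · (p(α)!/|α|!)^(1/2) · ρ^|α|)²`, since
`x_α = q^(−m(α)) x^(p(α))` with `m(α) = inversions α`, and the set is that of the limits whose
supremum over `0 < ρ < r` is the joint ℓ²-spectral radius. -/
theorem stmt14 {n : ℕ} (hn : 0 < n) (q : ℂ) (hq : ‖q‖ = 1) (r : ℝ) (hr : 0 < r) :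
    IsLUB {y : ℝ | ∃ ρ : ℝ, 0 < ρ ∧ ρ < r ∧
        Tendsto (fun d : ℕ =>
            (∑ α : Fin d → Fin n,
                (‖q ^ (-(inversions α : ℤ))‖ *
                    Real.sqrt
                      ((∏ i : Fin n,
                          (Nat.factorial ((Finset.univ.filter (fun j => α j = i)).card) : ℝ)) /
                        (Nat.factorial d : ℝ)) *
                  ρ ^ d) ^ 2) ^ (1 / (2 * (d : ℝ))))
          atTop (nhds y)}
      r := by
  have hlim (ρ : ℝ) (hρ : 0 < ρ) := tendsto_sumSqNormWords_rpow hn hq hρ.le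
  have hset : {y | ∃ ρ, 0 < ρ ∧ ρ < r ∧
      Tendsto (fun d : ℕ => sumSqNormWords n q ρ d ^ (1 / (2 * (d : ℝ)))) atTop (𝓝 y)} =
      Set.Ioo 0 r := by
    ext y
    constructor
    · rintro ⟨ρ, hρ, hρr, hy⟩
      obtain rfl := tendsto_nhds_unique hy (hlim ρ hρ)
      exact ⟨hρ, hρr⟩
    · rintro ⟨hy, hyr⟩
      exact ⟨y, hy, hyr, hlim y hy⟩
  exact hset ▸ isLUB_Ioo hr
end
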